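/- If ⟨E_M(N)⟩ = N, then each isolated component of a minimal primary decomposition of N is a prime submodule. That is, if N = Q_1 ∩ … ∩ Q_n is a minimal primary decomposition with Q_i p_i-primary and Q_k is a component whose prime p_k is minimal among p_1, …, p_n, then Q_k is prime (i.e. (Q_k : M) = p_k, so rm ∈ Q_k implies m ∈ Q_k or rM ⊆ Q_k). -/

import Mathlib

/-!
Let `P` be the radical of `(Q : M)` for an isolated component `Q` of `N = Q ⊓ N'`, where `N'`
is the intersection of the other components. Minimality of `P` gives `s ∈ (N' : M)` with `s ∉ P`.
For `r ∈ P` with `r ^ t • M ⊆ Q` and any `x`, the element `r ^ (t + 1) • s • x` lies in `N`, so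
`r • s • x` lies in the envelope of `N`, hence in `N ⊆ Q`; as `Q` is primary and `s ∉ P`, this
forces `r • x ∈ Q`. Thus `(Q : M) = P`, and a primary submodule whose colon ideal is prime is prime.
-/

open Set

namespace Submodule

variable {R M : Type*} [CommRing R] [AddCommGroup M] [Module R M]

def envelope (N : Submodule R M) : Set M :=
  {x | ∃ (r : R) (m : M) (t : ℕ), 0 < t ∧ r ^ t • m ∈ N ∧ x = r • m}

theorem smul_mem_of_pow_smul_mem_of_span_envelope_eq {N : Submodule R M}
    (hN : span R N.envelope = N) {r : R} {m : M} {t : ℕ} (ht : 0 < t) (h : r ^ t • m ∈ N) :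
    r • m ∈ N :=
  hN ▸ subset_span ⟨r, m, t, ht, h, rfl⟩

theorem isPrimary_of_forall_smul_mem {Q : Submodule R M} (hQ : Q ≠ ⊤)
    (h : ∀ (r : R) (m : M), r • m ∈ Q → m ∈ Q ∨ ∃ t : ℕ, 0 < t ∧ ∀ x : M, r ^ t • x ∈ Q) :
    Q.IsPrimary := by
  refine ⟨hQ, fun {r m} hrm ↦ (h r m hrm).imp_right fun ⟨t, _, ht⟩ ↦ ⟨t, ?_⟩⟩
  rw [← mem_colon_iff_le, mem_colon]
  exact fun x _ ↦ ht x

theorem IsPrimary.mem_or_forall_smul_mem_of_colon_eq_radical {Q : Submodule R M}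
    (hQ : Q.IsPrimary) (h : Q.colon univ = (Q.colon univ).radical) {r : R} {m : M}
    (hrm : r • m ∈ Q) : m ∈ Q ∨ ∀ x : M, r • x ∈ Q :=
  (hQ.mem_or_mem hrm).imp_right fun hr x ↦ mem_colon.mp (h ▸ hr) x (mem_univ x)

theorem not_finsetInf_colon_le {ι : Type*} (s : Finset ι) (Q : ι → Submodule R M)
    {P : Ideal R} (hP : P.IsPrime) (h : ∀ i ∈ s, ¬ ((Q i).colon univ).radical ≤ P) :
    ¬ (s.inf Q).colon univ ≤ P := by
  rw [colon_finsetInf, hP.inf_le']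
  rintro ⟨i, hi, hle⟩
  exact h i hi (hP.radical_le_iff.mpr hle)

theorem IsPrimary.colon_eq_radical_of_span_envelope_eq {N Q N' : Submodule R M}
    (hN : span R N.envelope = N) (hQ : Q.IsPrimary) (hdecomp : N = Q ⊓ N')
    (hN' : ¬ N'.colon univ ≤ (Q.colon univ).radical) :
    Q.colon univ = (Q.colon univ).radical := by
  refine le_antisymm Ideal.le_radical fun r hr ↦ ?_
  obtain ⟨s, hsN', hs⟩ := SetLike.not_le_iff_exists.mp hN'
  obtain ⟨t, ht⟩ := Ideal.mem_radical_iff.mp hr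
  refine mem_colon.mpr fun x _ ↦ ?_
  have hpow : r ^ (t + 1) • s • x ∈ N := by
    rw [hdecomp, pow_succ', mul_smul]
    exact ⟨Q.smul_mem r (mem_colon.mp ht _ (mem_univ _)),
      N'.smul_mem _ (N'.smul_mem _ (mem_colon.mp hsN' x (mem_univ x)))⟩
  have hrs : s • r • x ∈ Q := by
    rw [smul_comm]
    exact (hdecomp.le (smul_mem_of_pow_smul_mem_of_span_envelope_eq hN t.succ_pos hpow)).1
  exact (hQ.mem_or_mem hrs).resolve_right hs

end Submodule

open Submodule

theorem isolated_component_prime_of_envelope_eq_general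
    {R M : Type*} [CommRing R]
    [AddCommGroup M] [Module R M]
    (N : Submodule R M)
    (n : ℕ) (Q : Fin n → Submodule R M) (p : Fin n → Ideal R)
    -- each `Q i` is a primary submodule
    (hprimary : ∀ i, Q i ≠ ⊤ ∧ ∀ (r : R) (m : M), r • m ∈ Q i →
        m ∈ Q i ∨ ∃ t : ℕ, 0 < t ∧ ∀ x : M, r ^ t • x ∈ Q i)
    -- each `Q i` is `p i`-primary, i.e. `p i = √(Q i : M)`
    (hrad : ∀ i, ((Q i).colon ⊤).radical = p i)
    -- the decomposition
    (hdecomp : N = ⨅ i, Q i)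
    -- minimality: the primes are pairwise distinct and no component is redundant
    (hdistinct : Function.Injective p)
    -- the envelope of `N` generates `N`
    (henv : Submodule.span R {x : M | ∃ (r : R) (m : M) (t : ℕ),
        0 < t ∧ r ^ t • m ∈ N ∧ x = r • m} = N)
    -- `Q k` is an isolated component: `p k` is minimal among the `p i`
    (k : Fin n) (hmin : ∀ i, p i ≤ p k → p i = p k) :
    (Q k).colon ⊤ = p k ∧
      ∀ (r : R) (m : M), r • m ∈ Q k → m ∈ Q k ∨ ∀ x : M, r • x ∈ Q k := by
  have hQ : ∀ i, (Q i).IsPrimary := fun i ↦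
    isPrimary_of_forall_smul_mem (hprimary i).1 (hprimary i).2
  have hNk : N = Q k ⊓ (Finset.univ.erase k).inf Q := by
    rw [hdecomp, ← Finset.inf_univ_eq_iInf, ← Finset.inf_insert,
      Finset.insert_erase (Finset.mem_univ k)]
  have hothers : ¬ ((Finset.univ.erase k).inf Q).colon univ ≤ p k :=
    not_finsetInf_colon_le _ Q (hrad k ▸ (hQ k).isPrime_radical_colon) fun i hi hle ↦
      Finset.ne_of_mem_erase hi (hdistinct (hmin i (hrad i ▸ hle)))
  have hcolon : (Q k).colon univ = ((Q k).colon univ).radical :=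
    (hQ k).colon_eq_radical_of_span_envelope_eq henv hNk (by rwa [← hrad k] at hothers)
  exact ⟨hcolon.trans (hrad k),
    fun r m ↦ (hQ k).mem_or_forall_smul_mem_of_colon_eq_radical hcolon⟩

/-- If `⟨E_M(N)⟩ = N` and `N = Q₁ ∩ ⋯ ∩ Q_n` is a minimal primary
decomposition with `Qᵢ` `pᵢ`-primary, then every isolated component (one whose prime is
minimal among `p₁, …, p_n`) is a prime submodule. -/
theorem isolated_component_prime_of_envelope_eq
    {R M : Type*} [CommRing R] [IsNoetherianRing R]
    [AddCommGroup M] [Module R M] [Module.Finite R M]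
    (N : Submodule R M) (hN : N ≠ ⊤)
    (n : ℕ) (Q : Fin n → Submodule R M) (p : Fin n → Ideal R)
    -- each `Q i` is a primary submodule
    (hprimary : ∀ i, Q i ≠ ⊤ ∧ ∀ (r : R) (m : M), r • m ∈ Q i →
        m ∈ Q i ∨ ∃ t : ℕ, 0 < t ∧ ∀ x : M, r ^ t • x ∈ Q i)
    -- each `Q i` is `p i`-primary, i.e. `p i = √(Q i : M)`
    (hrad : ∀ i, ((Q i).colon ⊤).radical = p i)
    (hprime : ∀ i, (p i).IsPrime)
    -- the decomposition
    (hdecomp : N = ⨅ i, Q i)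
    -- minimality: the primes are pairwise distinct and no component is redundant
    (hdistinct : Function.Injective p)
    (hirr : ∀ j, ¬ (⨅ i, ⨅ _ : i ≠ j, Q i) ≤ Q j)
    -- the envelope of `N` generates `N`
    (henv : Submodule.span R {x : M | ∃ (r : R) (m : M) (t : ℕ),
        0 < t ∧ r ^ t • m ∈ N ∧ x = r • m} = N)
    -- `Q k` is an isolated component: `p k` is minimal among the `p i`
    (k : Fin n) (hmin : ∀ i, p i ≤ p k → p i = p k) :
    (Q k).colon ⊤ = p k ∧
      ∀ (r : R) (m : M), r • m ∈ Q k → m ∈ Q k ∨ ∀ x : M, r • x ∈ Q k :=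
  isolated_component_prime_of_envelope_eq_general N n Q p hprimary hrad hdecomp hdistinct henv k
    hmin
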